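/- arXiv:math/0401087 — 2 statements merged into one kernel-verified Lean document; each statement's English description precedes it below -/
import Mathlib

section
/- Every φ ∈ Ξ'_ι[λ] has nonnegative constant term: φ(0) ≥ 0. (Equivalently, the zero vector lies in Σ'_ι[λ] = { x : φ(x) ≥ 0 for all φ ∈ Ξ'_ι[λ] }; this is the key step showing that the connected component B_0(λ) is contained in Σ_ι[λ] ∩ Σ'_ι[λ] in Theorem 6.1.) -/
noncomputable section

/-- An affine function `φ(x) = c + Σ_k φ_k x_k` on `ℤ^∞[λ]`: a constant term
together with a finitely supported family of coefficients indexed by the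
nonzero integers (the coefficient at index `0` is always `0` below). -/
abbrev Aff : Type := ℚ × (ℤ →₀ ℚ)

/-- Evaluation of an affine function at a rational point. -/
def evalF (φ : Aff) (x : ℤ → ℚ) : ℚ := φ.1 + ∑ t ∈ φ.2.support, φ.2 t * x t

/-- Evaluation of an affine function at an integer point. -/
def evalZ (φ : Aff) (x : ℤ →₀ ℤ) : ℚ := φ.1 + ∑ t ∈ φ.2.support, φ.2 t * (x t : ℚ)

variable {I : Type*}

/-- `σ_k(x) = x_k + Σ_{j>k, j≠0} a_{i_k i_j} x_j` for `k ≥ 1`, with the extra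
constant `-ℓ_{i_k}` when `k ≤ -1`. -/
def sigmaG (a : I → I → ℤ) (ℓ : I → ℤ) (ι : ℤ → I) (k : ℤ) (x : ℤ →₀ ℤ) : ℤ :=
  (if k ≤ -1 then -ℓ (ι k) else 0) + x k +
    ∑ j ∈ x.support.filter (fun j => k < j ∧ j ≠ 0), a (ι k) (ι j) * x j

/-- The affine function `β̄_k = σ_k − σ_{k^{(+)}}`, given explicitly:
`β̄_k(x) = x_k + Σ_{k<j<k^{(+)}, j≠0} a_{i_k i_j} x_j + x_{k^{(+)}}`, plus the
constant `-ℓ_{i_k}` exactly when `k ≤ -1 < 1 ≤ k^{(+)}`. -/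
def betaBarG (a : I → I → ℤ) (ℓ : I → ℤ) (ι : ℤ → I) (kp : ℤ → ℤ) (k : ℤ) : Aff :=
  ⟨if k ≤ -1 ∧ 1 ≤ kp k then -(ℓ (ι k) : ℚ) else 0,
   Finsupp.onFinset (insert k (insert (kp k) (Finset.Ioo k (kp k))))
     (fun j => (if j = k then 1 else 0) + (if j = kp k then 1 else 0)
       + (if k < j ∧ j < kp k ∧ j ≠ 0 then (a (ι k) (ι j) : ℚ) else 0))
     (by
       intro j hj
       simp only [Finset.mem_insert, Finset.mem_Ioo]
       by_contra hc
       push_neg at hc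
       obtain ⟨h1, h2, h3⟩ := hc
       apply hj
       simp only [if_neg h1, if_neg h2,
         if_neg (show ¬(k < j ∧ j < kp k ∧ j ≠ 0) by omega)]
       ring)⟩

/-- The operator `S̄_k` on affine functions: `S̄_k φ = φ − φ_k β̄_k` if `φ_k > 0`
and `S̄_k φ = φ − φ_k β̄_{k^{(−)}}` if `φ_k ≤ 0`. -/
def SbarG (a : I → I → ℤ) (ℓ : I → ℤ) (ι : ℤ → I) (kp km : ℤ → ℤ) (k : ℤ) (φ : Aff) :
    Aff :=
  if 0 < φ.2 k then
    ⟨φ.1 - φ.2 k * (betaBarG a ℓ ι kp k).1, φ.2 - φ.2 k • (betaBarG a ℓ ι kp k).2⟩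
  else
    ⟨φ.1 - φ.2 k * (betaBarG a ℓ ι kp (km k)).1,
     φ.2 - φ.2 k • (betaBarG a ℓ ι kp (km k)).2⟩

end

noncomputable section

/-- The sequence `ι = (…,2,1,2,1,t_λ,2,1,2,1,…)` of type `A_1^{(1)}`:
`i_k = 1` for `k ≥ 1` odd, `i_k = 2` for `k ≥ 1` even, `i_{−m} = 2` for
`m ≥ 1` odd, `i_{−m} = 1` for `m ≥ 1` even. -/
def iseqB (k : ℤ) : ℤ :=
  if 0 < k then (if k % 2 = 1 then 1 else 2) else (if k % 2 = 1 then 2 else 1)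

/-- The Cartan matrix of type `A_1^{(1)}`: `a_{11} = a_{22} = 2`,
`a_{12} = a_{21} = −2`. -/
def aB (p q : ℤ) : ℤ := if p = q then 2 else -2

/-- The weight coefficients: `ℓ 1 = λ_1`, `ℓ 2 = λ_2`. -/
def lamB (lam1 lam2 : ℤ) (p : ℤ) : ℤ := if p = 1 then lam1 else lam2

/-- `k^{(+)}` for the type `A_1^{(1)}` sequence. -/
def kpB (k : ℤ) : ℤ := if -2 ≤ k ∧ k ≤ -1 then k + 3 else k + 2

/-- `k^{(−)}` for the type `A_1^{(1)}` sequence. -/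
def kmB (k : ℤ) : ℤ := if 1 ≤ k ∧ k ≤ 2 then k - 3 else k - 2

/-- The operator `S̄` at position `k` for the type `A_1^{(1)}` sequence. -/
def SbarB (lam1 lam2 : ℤ) (k : ℤ) (φ : Aff) : Aff :=
  SbarG aB (lamB lam1 lam2) iseqB kpB kmB k φ

/-- `C_{−k} = max(0, −(k−1)λ_1 − kλ_2)`, type `A_1^{(1)}`. -/
def CB (lam1 lam2 k : ℤ) : ℤ := max 0 (-(k - 1) * lam1 - k * lam2)

/-- The generator `x_{−k} + C_{−k}` of `Ξ'_ι[λ]`, as an affine function. -/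
def genB (lam1 lam2 : ℤ) (k : ℤ) : Aff :=
  ⟨(CB lam1 lam2 k : ℚ), Finsupp.single (-k) 1⟩

/-- `Ξ'_ι[λ] = { S̄_{−j_l} ⋯ S̄_{−j_1}(x_{−k} + C_{−k}) :
l ≥ 0, k ≥ 1, j_1,…,j_l ≥ 1 }` for type `A_1^{(1)}`. -/
def XiPrimeB (lam1 lam2 : ℤ) : Set Aff :=
  { φ | ∃ js : List ℤ, (∀ m ∈ js, 1 ≤ m) ∧ ∃ k : ℤ, 1 ≤ k ∧
      φ = js.foldl (fun ψ m => SbarB lam1 lam2 (-m) ψ) (genB lam1 lam2 k) }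

/-- `φ^{(l)}_{−k}`: `S̄` applied to `x_{−k}` at the `l` consecutive nonzero
positions `−k, −k+1, …` (skipping `0`). -/
def phiLB (lam1 lam2 k : ℤ) : ℕ → Aff
  | 0 => ⟨0, Finsupp.single (-k) 1⟩
  | l + 1 =>
      SbarB lam1 lam2 (if (-k + (l : ℤ)) < 0 then -k + (l : ℤ) else -k + (l : ℤ) + 1)
        (phiLB lam1 lam2 k l)

/-- `θ(t) = 1` for `t ≥ 0` and `θ(t) = 0` for `t < 0`. -/
def theta (t : ℤ) : ℤ := if 0 ≤ t then 1 else 0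

/-- The coordinate `x_t`, with the convention that the coordinate indexed by
`0` is `0`. -/
def Xc0 (x : ℤ → ℚ) (t : ℤ) : ℚ := if t = 0 then 0 else x t

end

/-!
Starting from `x_{-k} + C_{-k}`, the operators `S̄_{-m}` never leave the `k + 1` affine functions
`φ_s = c_s + (s + 1) x_{n(s)} - s x_{n(s+1)}`, `0 ≤ s ≤ k`, where `n(0) = -k < n(1) < ⋯`
enumerate the nonzero integers: `S̄_{n(s)}` moves `φ_s` to `φ_{s+1}`, `S̄_{n(s+1)}` moves it back to
`φ_{s-1}`, and every other `S̄_{-m}` fixes it, its coefficient at `-m` being zero. Only the steps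
through `β̄_{-2}` and `β̄_{-1}` change the constant term, so `c_s` is `C_{-k}`, then
`C_{-k} + (k - 1) λ_1` from `s = k - 1` on, and `C_{-k} + (k - 1) λ_1 + k λ_2` at `s = k`; all
three are nonnegative because `C_{-k}` is the maximum of `0` and `-(k - 1) λ_1 - k λ_2`.
-/

section SbarG

variable {I : Type*} {a : I → I → ℤ} {ℓ : I → ℤ} {ι : ℤ → I} {kp km : ℤ → ℤ} {k : ℤ}
  {φ : Aff}

lemma SbarG_of_pos (h : 0 < φ.2 k) :
    SbarG a ℓ ι kp km k φ = φ - φ.2 k • betaBarG a ℓ ι kp k := by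
  rw [SbarG, if_pos h]
  rfl

lemma SbarG_of_nonpos (h : φ.2 k ≤ 0) :
    SbarG a ℓ ι kp km k φ = φ - φ.2 k • betaBarG a ℓ ι kp (km k) := by
  rw [SbarG, if_neg h.not_gt]
  rfl

lemma SbarG_of_coeff_eq_zero (h : φ.2 k = 0) : SbarG a ℓ ι kp km k φ = φ := by
  rw [SbarG_of_nonpos h.le, h, zero_smul, sub_zero]

end SbarG

def nextNonzero (p : ℤ) : ℤ := if p = -1 then 1 else p + 1

def betaConstB (lam1 lam2 p : ℤ) : ℤ := if p = -2 then -lam1 else if p = -1 then -lam2 else 0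

lemma aB_iseqB_of_between {p j : ℤ} (hp : p ≠ 0) (hpj : p < j) (hj : j < kpB p)
    (hj0 : j ≠ 0) :
    aB (iseqB p) (iseqB j) = -2 := by
  simp only [kpB] at hj
  simp only [aB, iseqB]
  split_ifs <;> omega

lemma betaBarG_aB_of_ne_zero (lam1 lam2 : ℤ) {p : ℤ} (hp : p ≠ 0) :
    betaBarG aB (lamB lam1 lam2) iseqB kpB p =
      ⟨betaConstB lam1 lam2 p,
       Finsupp.single p 1 - (2 : ℚ) • Finsupp.single (nextNonzero p) 1 +
         Finsupp.single (nextNonzero (nextNonzero p)) 1⟩ := by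
  refine Prod.ext ?_ ?_
  · simp only [betaBarG, betaConstB, kpB, lamB, iseqB]
    split_ifs <;> first | omega | (push_cast; rfl)
  · ext j
    have hcoef : (if p < j ∧ j < kpB p ∧ j ≠ 0 then (aB (iseqB p) (iseqB j) : ℚ) else 0) =
        if p < j ∧ j < kpB p ∧ j ≠ 0 then -2 else 0 :=
      ite_congr rfl (fun hj => by rw [aB_iseqB_of_between hp hj.1 hj.2.1 hj.2.2]; norm_num)
        fun _ => rfl
    simp only [betaBarG, Finsupp.onFinset_apply]
    rw [hcoef]
    simp only [Finsupp.add_apply, Finsupp.sub_apply, Finsupp.smul_apply, Finsupp.single_apply,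
      kpB, nextNonzero]
    split_ifs <;> first | contradiction | omega | norm_num

/-- `n(s)`: the `s`-th nonzero integer counted from `n(0) = -k`. -/
def nonzeroFrom (k s : ℤ) : ℤ := if s < k then s - k else s - k + 1

section Orbit

variable {lam1 lam2 k s : ℤ}

lemma nonzeroFrom_succ (k s : ℤ) : nonzeroFrom k (s + 1) = nextNonzero (nonzeroFrom k s) := by
  simp only [nonzeroFrom, nextNonzero]
  split_ifs <;> omega

lemma nonzeroFrom_ne_zero (k s : ℤ) : nonzeroFrom k s ≠ 0 := by
  unfold nonzeroFrom; split_ifs <;> omega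

lemma nonzeroFrom_lt_succ (k s : ℤ) : nonzeroFrom k s < nonzeroFrom k (s + 1) := by
  unfold nonzeroFrom; split_ifs <;> omega

lemma nonzeroFrom_neg_iff : nonzeroFrom k s < 0 ↔ s < k := by
  unfold nonzeroFrom; split_ifs <;> omega

def orbitConstB (lam1 lam2 k s : ℤ) : ℤ :=
  CB lam1 lam2 k + (if k - 1 ≤ s then (k - 1) * lam1 else 0) + (if k ≤ s then k * lam2 else 0)

noncomputable def orbitFunB (lam1 lam2 k s : ℤ) : Aff :=
  ⟨orbitConstB lam1 lam2 k s,
   ((s : ℚ) + 1) • Finsupp.single (nonzeroFrom k s) 1 -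
     (s : ℚ) • Finsupp.single (nonzeroFrom k (s + 1)) 1⟩

def orbitB (lam1 lam2 k : ℤ) : Set Aff := orbitFunB lam1 lam2 k '' Set.Icc 0 k

lemma orbitFunB_coeff (t : ℤ) :
    (orbitFunB lam1 lam2 k s).2 t =
      (if nonzeroFrom k s = t then (s : ℚ) + 1 else 0) -
        (if nonzeroFrom k (s + 1) = t then (s : ℚ) else 0) := by
  simp only [orbitFunB, Finsupp.sub_apply, Finsupp.smul_apply, Finsupp.single_apply, smul_eq_mul,
    mul_ite, mul_one, mul_zero]

lemma orbitConstB_succ (hsk : s < k) :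
    orbitConstB lam1 lam2 k (s + 1) =
      orbitConstB lam1 lam2 k s - (s + 1) * betaConstB lam1 lam2 (nonzeroFrom k s) := by
  simp only [orbitConstB, betaConstB, nonzeroFrom, if_pos hsk]
  split_ifs <;> first | omega | grind

lemma orbitConstB_pred (hsk : s + 1 < k) :
    orbitConstB lam1 lam2 k (s - 1) = orbitConstB lam1 lam2 k s := by
  simp only [orbitConstB]
  rw [if_neg (by omega), if_neg (by omega), if_neg (by omega), if_neg (by omega)]

lemma betaConstB_nonzeroFrom_pred (hsk : s + 1 < k) :
    betaConstB lam1 lam2 (nonzeroFrom k (s - 1)) = 0 := by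
  simp only [betaConstB, nonzeroFrom]
  split_ifs <;> omega

lemma SbarB_orbitFunB_forward (hs0 : 0 ≤ s) (hsk : s < k) :
    SbarB lam1 lam2 (nonzeroFrom k s) (orbitFunB lam1 lam2 k s) =
      orbitFunB lam1 lam2 k (s + 1) := by
  have hcoef : (orbitFunB lam1 lam2 k s).2 (nonzeroFrom k s) = (s : ℚ) + 1 := by
    rw [orbitFunB_coeff, if_pos rfl, if_neg (nonzeroFrom_lt_succ k s).ne', sub_zero]
  rw [SbarB, SbarG_of_pos (by rw [hcoef]; positivity), hcoef,
    betaBarG_aB_of_ne_zero _ _ (nonzeroFrom_ne_zero k s), ← nonzeroFrom_succ,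
    ← nonzeroFrom_succ]
  refine Prod.ext ?_ ?_
  · simp only [orbitFunB, Prod.fst_sub, Prod.smul_fst, smul_eq_mul, orbitConstB_succ hsk]
    push_cast
    ring
  · simp only [orbitFunB, Prod.snd_sub, Prod.smul_snd]
    push_cast
    module

lemma SbarB_orbitFunB_backward (hs1 : 1 ≤ s) (hsk : s + 1 < k) :
    SbarB lam1 lam2 (nonzeroFrom k (s + 1)) (orbitFunB lam1 lam2 k s) =
      orbitFunB lam1 lam2 k (s - 1) := by
  have hcoef : (orbitFunB lam1 lam2 k s).2 (nonzeroFrom k (s + 1)) = -s := by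
    rw [orbitFunB_coeff, if_neg (nonzeroFrom_lt_succ k s).ne, if_pos rfl, zero_sub]
  have hkm : kmB (nonzeroFrom k (s + 1)) = nonzeroFrom k (s - 1) := by
    simp only [kmB, nonzeroFrom]
    split_ifs <;> omega
  have hs0 : (0 : ℚ) ≤ s := by exact_mod_cast (by omega : (0 : ℤ) ≤ s)
  rw [SbarB, SbarG_of_nonpos (by rw [hcoef, neg_nonpos]; exact hs0), hcoef, hkm,
    betaBarG_aB_of_ne_zero _ _ (nonzeroFrom_ne_zero k _), ← nonzeroFrom_succ,
    ← nonzeroFrom_succ, sub_add_cancel]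
  refine Prod.ext ?_ ?_
  · simp only [orbitFunB, Prod.fst_sub, Prod.smul_fst, smul_eq_mul, orbitConstB_pred hsk,
      betaConstB_nonzeroFrom_pred hsk]
    push_cast
    ring
  · simp only [orbitFunB, Prod.snd_sub, Prod.smul_snd, sub_add_cancel]
    push_cast
    module

lemma SbarB_mem_orbitB {m : ℤ} (hm : 1 ≤ m) {φ : Aff} (hφ : φ ∈ orbitB lam1 lam2 k) :
    SbarB lam1 lam2 (-m) φ ∈ orbitB lam1 lam2 k := by
  obtain ⟨s, ⟨hs0, hsk⟩, rfl⟩ := hφ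
  by_cases hfwd : nonzeroFrom k s = -m ∧ s < k
  · refine ⟨s + 1, ⟨by omega, by omega⟩, ?_⟩
    rw [← hfwd.1, SbarB_orbitFunB_forward hs0 hfwd.2]
  by_cases hbwd : nonzeroFrom k (s + 1) = -m ∧ 1 ≤ s ∧ s + 1 < k
  · refine ⟨s - 1, ⟨by omega, by omega⟩, ?_⟩
    rw [← hbwd.1, SbarB_orbitFunB_backward hbwd.2.1 hbwd.2.2]
  refine ⟨s, ⟨hs0, hsk⟩, (SbarG_of_coeff_eq_zero ?_).symm⟩
  have hnot : ¬ nonzeroFrom k s = -m := fun h => hfwd ⟨h, nonzeroFrom_neg_iff.1 (by omega)⟩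
  rw [orbitFunB_coeff, if_neg hnot, zero_sub, neg_eq_zero]
  split_ifs with h
  · have : s + 1 < k := nonzeroFrom_neg_iff.1 (by omega)
    exact_mod_cast (show s = 0 by omega)
  · rfl

lemma genB_eq_orbitFunB_zero (hk : 1 ≤ k) : genB lam1 lam2 k = orbitFunB lam1 lam2 k 0 := by
  have hn : nonzeroFrom k 0 = -k := by
    rw [nonzeroFrom, if_pos (by omega), zero_sub]
  refine Prod.ext ?_ ?_
  · simp only [genB, orbitFunB, orbitConstB, if_neg (show ¬ k ≤ 0 by omega)]
    split_ifs with h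
    · rw [show k = 1 by omega]
      simp
    · simp
  · simp [genB, orbitFunB, hn]

lemma orbitConstB_nonneg (hlam1 : 0 ≤ lam1) (hk : 1 ≤ k) (s : ℤ) :
    0 ≤ orbitConstB lam1 lam2 k s := by
  have hC0 : 0 ≤ CB lam1 lam2 k := le_max_left _ _
  have hC : -(k - 1) * lam1 - k * lam2 ≤ CB lam1 lam2 k := le_max_right _ _
  have hk1 : 0 ≤ (k - 1) * lam1 := mul_nonneg (by omega) hlam1
  unfold orbitConstB
  split_ifs <;> linarith

end Orbit

theorem XiPrime_constant_term_nonneg_A_1_1_general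
    (lam1 lam2 : ℤ) (h1 : 0 < lam1) :
    ∀ φ ∈ XiPrimeB lam1 lam2, 0 ≤ φ.1 := by
  rintro φ ⟨js, hjs, k, hk, rfl⟩
  have hgen : genB lam1 lam2 k ∈ orbitB lam1 lam2 k :=
    ⟨0, ⟨le_rfl, by omega⟩, (genB_eq_orbitFunB_zero hk).symm⟩
  obtain ⟨s, -, hs⟩ := List.foldlRecOn (motive := (· ∈ orbitB lam1 lam2 k)) js _ hgen
    fun ψ hψ m hm => SbarB_mem_orbitB (hjs m hm) hψ
  rw [← hs]
  exact Int.cast_nonneg_iff.mpr (orbitConstB_nonneg h1.le hk s)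

/-- Type `A_1^{(1)}` (key step of Hoshino–Nakashima, Theorem 6.1): every
element of `Ξ'_ι[λ]` has nonnegative constant term; equivalently, the zero
vector lies in `Σ'_ι[λ]`. -/
theorem XiPrime_constant_term_nonneg_A_1_1
    (lam1 lam2 : ℤ) (h1 : 0 < lam1) (h2 : lam2 ≤ 0) (hlev : 0 < lam1 + lam2) :
    ∀ φ ∈ XiPrimeB lam1 lam2, 0 ≤ φ.1 :=
  XiPrime_constant_term_nonneg_A_1_1_general lam1 lam2 h1
end

section
/- For every k ≥ 3, the function σ_{−k} evaluated at x_0 (the family with (x_0)_{−m} = −C_{−m} for all m ≥ 1) satisfies the recursion σ_{−k}(x_0) = −(X)_+ + 2(Y)_+ − (Z)_+ + σ_{−k+2}(x_0), where X := −(k−1)λ_1 − kλ_2, Y := −(k−2)λ_1 − (k−1)λ_2, Z := −(k−3)λ_1 − (k−2)λ_2; moreover σ_{−1}(x_0) = −(−λ_2)_+ − λ_2 = 0 and σ_{−2}(x_0) = −(−λ_1 − 2λ_2)_+ + 2(−λ_2)_+ − λ_1. -/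
noncomputable section

/-- `σ_{−k}(x) = −λ_{ε(k)} + x_{−k} + Σ_{m=1}^{k−1} c_{k,m} x_{−m}` where
`ε(k) = 2` for `k` odd, `ε(k) = 1` for `k` even, and `c_{k,m} = 2` if
`k ≡ m (mod 2)`, `c_{k,m} = −2` otherwise; here `x m` denotes the
coordinate `x_{−m}`. -/
def sigmaB (lam1 lam2 : ℤ) (x : ℤ → ℤ) (k : ℤ) : ℤ :=
  -(if k % 2 = 0 then lam1 else lam2) + x k +
    ∑ m ∈ Finset.Icc 1 (k - 1), (if k % 2 = m % 2 then 2 else -2) * x m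

end

/-- Type `A_1^{(1)}`: with `x₀` the vector with coordinates
`(x₀)_{−m} = −C_{−m}`, one has `σ_{−1}(x₀) = −(−λ_2)_+ − λ_2 = 0`,
`σ_{−2}(x₀) = −(−λ_1 − 2λ_2)_+ + 2(−λ_2)_+ − λ_1`, and for every `k ≥ 3`
the recursion `σ_{−k}(x₀) = −(X)_+ + 2(Y)_+ − (Z)_+ + σ_{−k+2}(x₀)` where
`X = −(k−1)λ_1 − kλ_2`, `Y = −(k−2)λ_1 − (k−1)λ_2`,
`Z = −(k−3)λ_1 − (k−2)λ_2` (Hoshino–Nakashima, proof of Theorem 6.1). -/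
theorem sigma_recursion_A_1_1
    (lam1 lam2 : ℤ) (h1 : 0 < lam1) (h2 : lam2 ≤ 0) (hlev : 0 < lam1 + lam2) :
    (sigmaB lam1 lam2 (fun m => -CB lam1 lam2 m) 1 = -max 0 (-lam2) - lam2 ∧
      sigmaB lam1 lam2 (fun m => -CB lam1 lam2 m) 1 = 0) ∧
    sigmaB lam1 lam2 (fun m => -CB lam1 lam2 m) 2 =
      -max 0 (-lam1 - 2 * lam2) + 2 * max 0 (-lam2) - lam1 ∧
    ∀ k : ℤ, 3 ≤ k →
      sigmaB lam1 lam2 (fun m => -CB lam1 lam2 m) k =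
        -max 0 (-(k - 1) * lam1 - k * lam2)
          + 2 * max 0 (-(k - 2) * lam1 - (k - 1) * lam2)
          - max 0 (-(k - 3) * lam1 - (k - 2) * lam2)
          + sigmaB lam1 lam2 (fun m => -CB lam1 lam2 m) (k - 2) := by
  refine ⟨⟨?_, ?_⟩, ?_, ?_⟩
  · simp [sigmaB, CB]; ring
  · simp [sigmaB, CB]; omega
  · norm_num [sigmaB, CB]; omega
  · intro k hk
    have hins : Finset.Icc 1 (k-1) = insert (k-1) (insert (k-2) (Finset.Icc 1 (k-3))) := by
      ext x; simp [Finset.mem_Icc]; omega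
    have hne1 : (k:ℤ)-1 ∉ insert (k-2) (Finset.Icc 1 (k-3)) := by
      simp [Finset.mem_Icc]; omega
    have hne2 : (k:ℤ)-2 ∉ Finset.Icc 1 (k-3) := by simp; omega
    have hmod : (k-2) % 2 = k % 2 := by omega
    have hmod1 : ¬ (k % 2 = (k-1) % 2) := by omega
    have hmod2 : (k % 2 = (k-2) % 2) := by omega
    have hif : (if (k-2) % 2 = 0 then lam1 else lam2) = (if k % 2 = 0 then lam1 else lam2) := by
      rw [hmod]
    simp only [sigmaB, hins, Finset.sum_insert hne1, Finset.sum_insert hne2, hmod, hif,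
      if_neg hmod1, if_pos hmod2]
    have e1 : CB lam1 lam2 (k-1) = max 0 (-(k - 2) * lam1 - (k - 1) * lam2) := by
      unfold CB; ring_nf
    have e2 : CB lam1 lam2 (k-2) = max 0 (-(k - 3) * lam1 - (k - 2) * lam2) := by
      unfold CB; ring_nf
    have e3 : CB lam1 lam2 k = max 0 (-(k - 1) * lam1 - k * lam2) := rfl
    rw [e1, e2, e3]
    ring_nf
    norm_num [mul_comm]
end
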